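/- arXiv:0810.4537 — 2 statements merged into one kernel-verified Lean document; each statement's English description precedes it below -/
import Mathlib

section
/- Let ε : ℝ^d → ℝ be 2π-periodic and analytic in a strip of width δ > 0, and let c(γ₁) = sup_{k∈T^d, |Im κ|≤γ₁} |Im ε(k+κ)|. Then the matrix elements of the free propagator on ℓ²(ℤ^d) satisfy the exponential decay bound |(e^{-itε(P)})(x,x')| ≤ e^{t·c(γ₁)} · e^{-γ₁|x'-x|} for every 0 < γ₁ < δ, all t ≥ 0, and all x, x' ∈ ℤ^d. -/
open MeasureTheory Complex Real

noncomputable section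

/-- The Euclidean norm of the vector of imaginary parts of `κ ∈ ℂ^d`. -/
def imNorm {d : ℕ} (κ : Fin d → ℂ) : ℝ := Real.sqrt (∑ i, (κ i).im ^ 2)

/-- The Euclidean norm of a lattice vector `x ∈ ℤ^d`. -/
def znorm {d : ℕ} (x : Fin d → ℤ) : ℝ := Real.sqrt (∑ i, ((x i : ℝ)) ^ 2)

/-!
The matrix element is the torus integral of `F z = e^{-itε(z)} e^{i(z, x'-x)}`. Since `F` is
holomorphic and `2π`-periodic in each variable, Cauchy's theorem on the rectangles
`[-π, π] × [0, η_j]`, applied in one variable at a time, moves the contour from `T^d` to `T^d + iη`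
for every `η` with `|η| ≤ γ₁`. There `|F| = e^{t Im ε} e^{-(η, x'-x)} ≤ e^{tc} e^{-(η, x'-x)}`, and
`η = γ₁ (x'-x)/|x'-x|` gives the bound.
-/

open Set Function
open scoped Interval

theorem setIntegral_Icc_add_mul_I_eq_of_periodic {F : Type*} [NormedAddCommGroup F]
    [NormedSpace ℂ F] {f : ℂ → F} {a b : ℝ}
    (hf : DifferentiableOn ℂ f ([[-π, π]] ×ℂ [[a, b]])) (hper : Periodic f (2 * π)) :
    ∫ u in Icc (-π) π, f (u + a * I) = ∫ u in Icc (-π) π, f (u + b * I) := by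
  have hrect := integral_boundary_rect_eq_zero_of_differentiableOn f (-π + a * I) (π + b * I)
    (by simpa using hf)
  -- the two vertical sides of the rectangle cancel by periodicity
  have hsides : ∀ y : ℝ, f (π + y * I) = f (-π + y * I) := fun y => by
    rw [← hper (-π + y * I)]; ring_nf
  simp only [add_re, add_im, neg_re, neg_im, ofReal_re, ofReal_im, mul_re, mul_im, I_re, I_im,
    mul_zero, mul_one, sub_zero, add_zero, zero_add, neg_zero, hsides, ofReal_neg] at hrect
  rw [integral_Icc_eq_integral_Ioc, integral_Icc_eq_integral_Ioc,
    ← intervalIntegral.integral_of_le (by linarith [pi_pos]),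
    ← intervalIntegral.integral_of_le (by linarith [pi_pos])]
  simpa [sub_eq_zero] using hrect

theorem setIntegral_univ_pi_eq_setIntegral_insertNth {n : ℕ} {F : Type*} [NormedAddCommGroup F]
    [NormedSpace ℝ F] (j : Fin (n + 1)) (s : Fin (n + 1) → Set ℝ)
    {g : (Fin (n + 1) → ℝ) → F} (hg : IntegrableOn g (univ.pi s)) :
    ∫ k in univ.pi s, g k =
      ∫ v in univ.pi (fun i => s (j.succAbove i)), ∫ u in s j, g (j.insertNth u v) := by
  set e : ℝ × (Fin n → ℝ) ≃ᵐ (Fin (n + 1) → ℝ) :=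
    (MeasurableEquiv.piFinSuccAbove (fun _ => ℝ) j).symm
  have he : MeasurePreserving e :=
    (volume_preserving_piFinSuccAbove (fun _ : Fin (n + 1) => ℝ) j).symm _
  have hpre : e ⁻¹' univ.pi s = s j ×ˢ univ.pi (fun i => s (j.succAbove i)) := by
    ext ⟨u, v⟩
    simp [e, Fin.forall_iff_succAbove j]
  rw [← he.map_eq, setIntegral_map_equiv, hpre, Measure.volume_eq_prod,
    ← setIntegral_prod_swap, setIntegral_prod]
  · rfl
  · have hge : IntegrableOn (fun p => g (e p)) (s j ×ˢ univ.pi fun i => s (j.succAbove i))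
        (volume.prod volume) := by
      rw [← hpre, ← Measure.volume_eq_prod]
      exact (he.integrableOn_comp_preimage e.measurableEmbedding).2 hg
    rw [IntegrableOn, ← Measure.prod_restrict] at hge ⊢
    exact hge.swap

theorem differentiable_insertNth {𝕜 E : Type*} [NontriviallyNormedField 𝕜] [NormedAddCommGroup E]
    [NormedSpace 𝕜 E] {n : ℕ} (j : Fin (n + 1)) (ζ : Fin n → E) :
    Differentiable 𝕜 fun w : E => Fin.insertNth (α := fun _ => E) j w ζ := by
  intro w
  have hupd : (fun w : E => Fin.insertNth (α := fun _ => E) j w ζ) =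
      update (Fin.insertNth (α := fun _ => E) j 0 ζ) j := by
    funext w; rw [Fin.update_insertNth]
  rw [hupd]
  exact (hasFDerivAt_update (𝕜 := 𝕜) (Fin.insertNth (α := fun _ => E) j 0 ζ) (i := j)
    w).differentiableAt

theorem ofReal_insertNth_add_mul_I {n : ℕ} (j : Fin (n + 1)) (u : ℝ) (v : Fin n → ℝ)
    (χ : Fin (n + 1) → ℝ) :
    (fun i => ((Fin.insertNth (α := fun _ => ℝ) j u v i : ℝ) : ℂ) + χ i * I) =
      j.insertNth ((u : ℂ) + χ j * I) fun i => (v i : ℂ) + χ (j.succAbove i) * I := by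
  rw [Fin.eq_insertNth_iff]
  refine ⟨by simp, funext fun i => ?_⟩
  simp [Fin.removeNth_apply]

theorem setIntegral_torus_add_mul_I_update_eq {n : ℕ} {F : Type*} [NormedAddCommGroup F]
    [NormedSpace ℂ F] {G : (Fin (n + 1) → ℂ) → F} {r χ : Fin (n + 1) → ℝ}
    (j : Fin (n + 1)) {h : ℝ} (hχ : ∀ i, |χ i| ≤ r i) (hh : |h| ≤ r j)
    (hG : ∀ z : Fin (n + 1) → ℂ, (∀ i, |(z i).im| ≤ r i) → DifferentiableAt ℂ G z)
    (hper : ∀ z : Fin (n + 1) → ℂ, G (update z j (z j + 2 * π)) = G z) :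
    ∫ k in univ.pi fun _ => Icc (-π) π, G (fun i => (k i : ℂ) + χ i * I) =
      ∫ k in univ.pi fun _ => Icc (-π) π, G (fun i => (k i : ℂ) + update χ j h i * I) := by
  have hint : ∀ χ' : Fin (n + 1) → ℝ, (∀ i, |χ' i| ≤ r i) →
      IntegrableOn (fun k : Fin (n + 1) → ℝ => G fun i => (k i : ℂ) + χ' i * I)
        (univ.pi fun _ => Icc (-π) π) := fun χ' hχ' =>
    ContinuousOn.integrableOn_compact (isCompact_univ_pi fun _ => isCompact_Icc) fun k _ =>
      ((hG _ fun i => by simpa using hχ' i).continuousAt.comp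
        (continuous_pi fun i => (continuous_ofReal.comp (continuous_apply i)).add
          continuous_const).continuousAt).continuousWithinAt
  have hupd : ∀ i, |update χ j h i| ≤ r i := fun i => by
    rcases eq_or_ne i j with rfl | hij
    · simpa using hh
    · simpa [hij] using hχ i
  rw [setIntegral_univ_pi_eq_setIntegral_insertNth j _ (hint χ hχ),
    setIntegral_univ_pi_eq_setIntegral_insertNth j _ (hint _ hupd)]
  refine setIntegral_congr_fun (MeasurableSet.univ_pi fun _ => measurableSet_Icc) fun v _ => ?_
  set ζ : Fin n → ℂ := fun i => (v i : ℂ) + χ (j.succAbove i) * I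
  have hslice : ∀ u : ℝ,
      (fun i => ((Fin.insertNth (α := fun _ => ℝ) j u v i : ℝ) : ℂ) + update χ j h i * I) =
        j.insertNth ((u : ℂ) + h * I) ζ := fun u => by
    simp [ofReal_insertNth_add_mul_I, ζ]
  simp only [ofReal_insertNth_add_mul_I j _ v χ, hslice]
  refine setIntegral_Icc_add_mul_I_eq_of_periodic (f := fun w => G (j.insertNth w ζ))
    (fun w hw => ?_) fun w => ?_
  · refine ((hG _ fun i => ?_).comp w (differentiable_insertNth j ζ w)).differentiableWithinAt
    refine j.succAboveCases ?_ (fun i => ?_) i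
    · have hw' : w.im ∈ [[χ j, h]] := by simpa using (mem_reProdIm.1 hw).2
      simpa using abs_le.2 (uIcc_subset_Icc (abs_le.1 (hχ j)) (abs_le.1 hh) hw')
    · simpa [ζ] using hχ (j.succAbove i)
  · simpa using hper (j.insertNth w ζ)

theorem setIntegral_torus_add_mul_I_eq {d : ℕ} {F : Type*} [NormedAddCommGroup F]
    [NormedSpace ℂ F] {G : (Fin d → ℂ) → F} (η : Fin d → ℝ)
    (hG : ∀ z : Fin d → ℂ, (∀ i, |(z i).im| ≤ |η i|) → DifferentiableAt ℂ G z)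
    (hper : ∀ (z : Fin d → ℂ) (j : Fin d), G (update z j (z j + 2 * π)) = G z) :
    ∫ k in univ.pi fun _ => Icc (-π) π, G (fun i => (k i : ℂ) + η i * I) =
      ∫ k in univ.pi fun _ => Icc (-π) π, G (fun i => (k i : ℂ)) := by
  classical
  suffices H : ∀ s : Finset (Fin d),
      ∫ k in univ.pi fun _ => Icc (-π) π, G (fun i => (k i : ℂ) + s.piecewise η 0 i * I) =
        ∫ k in univ.pi fun _ => Icc (-π) π, G (fun i => (k i : ℂ)) by
    simpa using H Finset.univ
  intro s
  induction s using Finset.induction_on with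
  | empty => simp
  | insert j s _ ih =>
    obtain ⟨n, rfl⟩ : ∃ n, d = n + 1 := ⟨d - 1, by have := j.pos; omega⟩
    have hs : ∀ i, |s.piecewise η 0 i| ≤ |η i| := fun i => by
      by_cases hi : i ∈ s <;> simp [hi]
    rw [Finset.piecewise_insert, ← ih]
    exact (setIntegral_torus_add_mul_I_update_eq j hs le_rfl hG (hper · j)).symm

theorem exists_sqrt_sum_sq_le_and_sum_mul_eq {ι : Type*} [Fintype ι] (y : ι → ℝ) {γ : ℝ}
    (hγ : 0 ≤ γ) :
    ∃ η : ι → ℝ, √(∑ i, η i ^ 2) ≤ γ ∧ ∑ i, η i * y i = γ * √(∑ i, y i ^ 2) := by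
  set N := √(∑ i, y i ^ 2)
  rcases eq_or_ne N 0 with hN | hN
  · exact ⟨0, by simpa using hγ, by simp [hN]⟩
  have hN2 : ∑ i, y i ^ 2 = N ^ 2 := (sq_sqrt (by positivity)).symm
  refine ⟨fun i => γ / N * y i, le_of_eq ?_, ?_⟩
  · simp_rw [mul_pow, ← Finset.mul_sum, hN2, div_pow, div_mul_cancel₀ _ (pow_ne_zero 2 hN),
      sqrt_sq hγ]
  · simp_rw [mul_assoc, ← Finset.mul_sum, ← sq, hN2]
    field_simp

def propagatorIntegrand {d : ℕ} (E : (Fin d → ℂ) → ℂ) (t : ℝ) (m : Fin d → ℤ)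
    (z : Fin d → ℂ) : ℂ :=
  exp (-I * t * E z) * exp (I * ∑ i, z i * (m i : ℂ))

theorem DifferentiableAt.propagatorIntegrand {d : ℕ} {E : (Fin d → ℂ) → ℂ} {z : Fin d → ℂ}
    (hE : DifferentiableAt ℂ E z) (t : ℝ) (m : Fin d → ℤ) :
    DifferentiableAt ℂ (propagatorIntegrand E t m) z := by
  unfold _root_.propagatorIntegrand
  fun_prop

theorem propagatorIntegrand_update_add_two_pi {d : ℕ} {E : (Fin d → ℂ) → ℂ}
    (hE : ∀ (z : Fin d → ℂ) (m : Fin d → ℤ), E (z + fun i => (2 * π : ℂ) * (m i : ℂ)) = E z)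
    (t : ℝ) (m : Fin d → ℤ) (z : Fin d → ℂ) (j : Fin d) :
    propagatorIntegrand E t m (update z j (z j + 2 * π)) = propagatorIntegrand E t m z := by
  have hz : update z j (z j + 2 * π) =
      z + fun i => (2 * π : ℂ) * ((Pi.single j 1 : Fin d → ℤ) i : ℂ) := by
    ext i
    rcases eq_or_ne i j with rfl | hij <;> simp [*]
  have hsum : ∑ i, update z j (z j + 2 * π) i * (m i : ℂ) =
      ∑ i, z i * (m i : ℂ) + (m j : ℂ) * (2 * π) := by
    rw [hz]
    simp only [Pi.add_apply, add_mul, Finset.sum_add_distrib, add_right_inj]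
    simp [Pi.single_apply, mul_comm]
  rw [propagatorIntegrand, propagatorIntegrand, hz, hE, ← hz, hsum, mul_add, Complex.exp_add,
    show I * ((m j : ℂ) * (2 * π)) = m j * (2 * π * I) by ring, exp_int_mul_two_pi_mul_I, mul_one]

theorem norm_propagatorIntegrand_ofReal_add_mul_I {d : ℕ} (E : (Fin d → ℂ) → ℂ) (t : ℝ)
    (m : Fin d → ℤ) (k η : Fin d → ℝ) :
    ‖propagatorIntegrand E t m fun i => (k i : ℂ) + η i * I‖ =
      Real.exp (t * (E fun i => (k i : ℂ) + η i * I).im) * Real.exp (-∑ i, η i * m i) := by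
  simp [propagatorIntegrand, norm_exp, im_sum]

theorem norm_inv_two_pi_pow_smul_setIntegral_le {d : ℕ} {F : Type*} [NormedAddCommGroup F]
    [NormedSpace ℝ F] {f : (Fin d → ℝ) → F} {C : ℝ} (hf : ∀ k, ‖f k‖ ≤ C) :
    ‖((2 * π) ^ d)⁻¹ • ∫ k in univ.pi fun _ => Icc (-π) π, f k‖ ≤ C := by
  have hvol : volume (univ.pi fun _ : Fin d => Icc (-π) π) = ENNReal.ofReal ((2 * π) ^ d) := by
    rw [volume_pi_pi, Finset.prod_const, Real.volume_Icc, ENNReal.ofReal_pow two_pi_pos.le]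
    simp [two_mul]
  have hint := norm_setIntegral_le_of_norm_le_const (hvol ▸ ENNReal.ofReal_lt_top) fun k _ => hf k
  rw [measureReal_def, hvol, ENNReal.toReal_ofReal (by positivity)] at hint
  rw [norm_smul, norm_inv, norm_pow, Real.norm_of_nonneg two_pi_pos.le]
  calc ((2 * π) ^ d)⁻¹ * ‖∫ k in univ.pi fun _ => Icc (-π) π, f k‖
      ≤ ((2 * π) ^ d)⁻¹ * (C * (2 * π) ^ d) := by gcongr
    _ = C := by field_simp

theorem free_propagator_matrix_element_decay_general
    (d : ℕ) (E : (Fin d → ℂ) → ℂ)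
    (hper : ∀ (z : Fin d → ℂ) (m : Fin d → ℤ),
      E (z + fun i => (2 * Real.pi : ℂ) * (m i : ℂ)) = E z)
    (δ γ₁ : ℝ) (hγ₁ : 0 < γ₁) (hγδ : γ₁ < δ)
    (hanal : DifferentiableOn ℂ E {z : Fin d → ℂ | imNorm z ≤ δ})
    (c : ℝ)
    (hc : ∀ (x : Fin d → ℝ) (κ : Fin d → ℂ), imNorm κ ≤ γ₁ →
      |(E fun i => (x i : ℂ) + κ i).im| ≤ c)
    (t : ℝ) (ht : 0 ≤ t) (x x' : Fin d → ℤ) :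
    ‖((2 * Real.pi) ^ d)⁻¹ •
        ∫ k in Set.univ.pi fun _ : Fin d => Set.Icc (-Real.pi) Real.pi,
          Complex.exp (-Complex.I * t * E fun i => ((k : Fin d → ℝ) i : ℂ)) *
            Complex.exp (Complex.I * ∑ i, ((k : Fin d → ℝ) i : ℂ) * ((x' i - x i : ℤ) : ℂ))‖
      ≤ Real.exp (t * c) * Real.exp (-γ₁ * znorm (x' - x)) := by
  obtain ⟨η, hη, hη_dot⟩ :=
    exists_sqrt_sum_sq_le_and_sum_mul_eq (fun i => ((x' - x) i : ℝ)) hγ₁.le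
  have hopen : IsOpen {z : Fin d → ℂ | imNorm z < δ} :=
    isOpen_lt (by unfold imNorm; fun_prop) continuous_const
  have hdiff : ∀ z : Fin d → ℂ, (∀ i, |(z i).im| ≤ |η i|) →
      DifferentiableAt ℂ (propagatorIntegrand E t (x' - x)) z := by
    intro z hz
    have hzδ : imNorm z < δ :=
      ((sqrt_le_sqrt (Finset.sum_le_sum fun i _ => sq_le_sq.2 (hz i))).trans hη).trans_lt hγδ
    exact (hanal.differentiableAt (Filter.mem_of_superset (hopen.mem_nhds hzδ)
      fun _ hw => le_of_lt (a := imNorm _) hw)).propagatorIntegrand t _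
  change ‖_ • ∫ k in _, propagatorIntegrand E t (x' - x) (fun i => ((k : Fin d → ℝ) i : ℂ))‖ ≤ _
  rw [← setIntegral_torus_add_mul_I_eq η hdiff (propagatorIntegrand_update_add_two_pi hper t _)]
  refine norm_inv_two_pi_pow_smul_setIntegral_le fun k => ?_
  rw [norm_propagatorIntegrand_ofReal_add_mul_I, hη_dot, znorm, neg_mul]
  gcongr
  exact (le_abs_self _).trans (hc k _ (by simpa [imNorm] using hη))

/-- Exponential decay of the matrix elements of the free propagator on `ℓ²(ℤ^d)`:
`|(e^{-itε(P)})(x,x')| = |(2π)^{-d} ∫_{T^d} e^{-itε(k)} e^{i(k, x'-x)} dk|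
  ≤ e^{t c(γ₁)} e^{-γ₁ |x'-x|}` for `0 < γ₁ < δ` and `t ≥ 0`. -/
theorem free_propagator_matrix_element_decay
    (d : ℕ) (E : (Fin d → ℂ) → ℂ)
    (hper : ∀ (z : Fin d → ℂ) (m : Fin d → ℤ),
      E (z + fun i => (2 * Real.pi : ℂ) * (m i : ℂ)) = E z)
    (hreal : ∀ x : Fin d → ℝ, (E fun i => (x i : ℂ)).im = 0)
    (δ γ₁ : ℝ) (hγ₁ : 0 < γ₁) (hγδ : γ₁ < δ)
    (hanal : DifferentiableOn ℂ E {z : Fin d → ℂ | imNorm z ≤ δ})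
    (hbdd : ∃ Cb : ℝ, ∀ z : Fin d → ℂ, imNorm z ≤ δ → ‖E z‖ ≤ Cb)
    (c : ℝ)
    (hc : ∀ (x : Fin d → ℝ) (κ : Fin d → ℂ), imNorm κ ≤ γ₁ →
      |(E fun i => (x i : ℂ) + κ i).im| ≤ c)
    (t : ℝ) (ht : 0 ≤ t) (x x' : Fin d → ℤ) :
    ‖((2 * Real.pi) ^ d)⁻¹ •
        ∫ k in Set.univ.pi fun _ : Fin d => Set.Icc (-Real.pi) Real.pi,
          Complex.exp (-Complex.I * t * E fun i => ((k : Fin d → ℝ) i : ℂ)) *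
            Complex.exp (Complex.I * ∑ i, ((k : Fin d → ℝ) i : ℂ) * ((x' i - x i : ℤ) : ℂ))‖
      ≤ Real.exp (t * c) * Real.exp (-γ₁ * znorm (x' - x)) :=
  free_propagator_matrix_element_decay_general d E hper δ γ₁ hγ₁ hγδ hanal c hc t ht x x'
end
end

section
/- Let h : ℝ₊ → ℝ₊ be measurable, z ∈ ℝ, n ≥ 1, and let π be the minimally irreducible pairing in P_n. Then the Laplace transform of χ_t(π) satisfies ∫_{ℝ₊} e^{-tz} χ_t(π) dt ≤ (∫_{ℝ₊} h(w) e^{-wz} dw) · (∫_{ℝ₊} ∫_{ℝ₊} h(y+w) e^{-wz} dy dw)^{n-1}, whenever the right-hand side integrals are finite. -/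
open MeasureTheory Real

noncomputable section

/-- The minimally irreducible pairing in `P_n`: `{(1,2)}` for `n = 1`,
`{(1,3),(2,4)}` for `n = 2`, and `(1,3), (2n-2,2n), (2i,2i+3)` for `i = 1,…,n-2`
for `n > 2`. -/
def minIrr (n : ℕ) : Finset (ℕ × ℕ) :=
  if n = 1 then {(1, 2)} else
    insert (1, 3) (insert (2 * n - 2, 2 * n)
      ((Finset.range (n - 2)).image fun i => (2 * i + 2, 2 * i + 5)))

/-- The time associated to the label `j ∈ {1,…,2n}`: `t₁ = 0`, `t_{2n} = t`, and the
interior times are the integration variables `u`. -/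
def tmv (n : ℕ) (t : ℝ) (u : Fin (2 * n - 2) → ℝ) (j : ℕ) : ℝ :=
  if j ≤ 1 then 0 else if 2 * n ≤ j then t
  else if h : j - 2 < 2 * n - 2 then u ⟨j - 2, h⟩ else 0

/-- `χ_t(π) = ∫_{0 = t₁ ≤ … ≤ t_{2n} = t} ∏_{(r,s)∈π} h(t_s - t_r) dt₂ ⋯ dt_{2n-1}`. -/
def chi (h : ℝ → ℝ) (n : ℕ) (t : ℝ) (pr : Finset (ℕ × ℕ)) : ℝ :=
  ∫ u in {u : Fin (2 * n - 2) → ℝ |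
      (∀ i j : Fin (2 * n - 2), i ≤ j → u i ≤ u j) ∧ ∀ i, 0 ≤ u i ∧ u i ≤ t},
    ∏ p ∈ pr, h (tmv n t u p.2 - tmv n t u p.1)

/-!
Write `χⁿ(t)` for `χ_t(π)` with `π` the minimally irreducible pairing of `P_n`. In `P_{n+1}` the
pair `(2n, 2n+2)` is the only one involving `t_{2n}`, and once `t_{2n+1}` is taken as the endpoint
the remaining pairs form the minimally irreducible pairing of `P_n`. Integrating out
`x = t_{2n+1}` and `a = t_{2n}`, and relaxing `t_{2n-1} ≤ a ≤ x` to `a ≤ x`, gives the convolution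
inequality `χⁿ⁺¹(t) ≤ ∫₀ᵗ χⁿ(x) k(t - x) dx` with `k(w) = ∫₀^∞ h(w + y) dy`. The Laplace transform
turns it into `L[χⁿ⁺¹] ≤ L[χⁿ] L[k]`, where `L[k]` is the double integral of the statement, and
`χ¹ = h` starts the induction. All of this is done with lower integrals in `ℝ≥0∞`; finiteness of
the two integrals is only needed to return to Bochner integrals at the end.
-/

namespace MinIrr

open Set
open scoped ENNReal

lemma ofReal_integral_le_lintegral_ofReal {α : Type*} [MeasurableSpace α] {μ : Measure α}
    {f : α → ℝ} (hf : 0 ≤ᵐ[μ] f) :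
    ENNReal.ofReal (∫ x, f x ∂μ) ≤ ∫⁻ x, ENNReal.ofReal (f x) ∂μ :=
  calc ENNReal.ofReal (∫ x, f x ∂μ) ≤ ‖∫ x, f x ∂μ‖ₑ := ofReal_le_enorm _
    _ ≤ ∫⁻ x, ‖f x‖ₑ ∂μ := enorm_integral_le_lintegral_enorm f
    _ = ∫⁻ x, ENNReal.ofReal (f x) ∂μ :=
      lintegral_congr_ae (hf.mono fun _ hx => Real.enorm_of_nonneg hx)

lemma lintegral_Ioi_comp_sub (f : ℝ → ℝ≥0∞) (a : ℝ) :
    ∫⁻ t in Ioi a, f (t - a) = ∫⁻ w in Ioi 0, f w := by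
  rw [← lintegral_indicator measurableSet_Ioi, ← lintegral_indicator measurableSet_Ioi,
    ← lintegral_sub_right_eq_self ((Ioi 0).indicator f) a]
  congr with t
  simp [indicator_apply]

lemma lintegral_Iic_comp_sub (f : ℝ → ℝ≥0∞) (t x : ℝ) :
    ∫⁻ a in Iic x, f (t - a) = ∫⁻ y in Ioi 0, f (t - x + y) := by
  rw [← restrict_Iio_eq_restrict_Iic, ← lintegral_indicator measurableSet_Iio,
    ← lintegral_indicator measurableSet_Ioi,
    ← lintegral_sub_left_eq_self ((Ioi 0).indicator fun y => f (t - x + y)) x]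
  congr with y
  simp [indicator_apply, sub_add]

lemma lintegral_Ioi_lintegral_Ioi_swap {F : ℝ → ℝ → ℝ≥0∞}
    (hF : Measurable (Function.uncurry F)) :
    ∫⁻ x in Ioi 0, ∫⁻ t in Ioi x, F x t
      = ∫⁻ t in Ioi 0, ∫⁻ x in Ioo 0 t, F x t := by
  let T : Set (ℝ × ℝ) := {p | 0 < p.1 ∧ p.1 < p.2}
  have hT : MeasurableSet T :=
    (measurableSet_lt measurable_const measurable_fst).inter
      (measurableSet_lt measurable_fst measurable_snd)
  have hTF : Measurable (T.indicator (Function.uncurry F)) := hF.indicator hT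
  calc ∫⁻ x in Ioi 0, ∫⁻ t in Ioi x, F x t
      = ∫⁻ x, ∫⁻ t, T.indicator (Function.uncurry F) (x, t) := by
        rw [← lintegral_indicator measurableSet_Ioi]
        congr with x
        by_cases hx : 0 < x
        · rw [indicator_of_mem (mem_Ioi.2 hx), ← lintegral_indicator measurableSet_Ioi]
          congr with t
          simp [T, indicator_apply, hx]
        · simp [T, hx]
    _ = ∫⁻ t, ∫⁻ x, T.indicator (Function.uncurry F) (x, t) :=
        lintegral_lintegral_swap hTF.aemeasurable
    _ = ∫⁻ t in Ioi 0, ∫⁻ x in Ioo 0 t, F x t := by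
        rw [← lintegral_indicator measurableSet_Ioi]
        congr with t
        by_cases ht : 0 < t
        · rw [indicator_of_mem (mem_Ioi.2 ht), ← lintegral_indicator measurableSet_Ioo]
          congr with x
        · have hT0 : ∀ x, T.indicator (Function.uncurry F) (x, t) = 0 :=
            fun x => indicator_of_notMem (fun hxt => ht (hxt.1.trans hxt.2)) _
          simp [hT0, indicator_of_notMem (show t ∉ Ioi 0 from ht)]

lemma lintegral_fin_snoc {α : Type*} [MeasureSpace α] [SigmaFinite (volume : Measure α)]
    {k : ℕ} {F : (Fin (k + 1) → α) → ℝ≥0∞} (hF : Measurable F) :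
    ∫⁻ u, F u = ∫⁻ x, ∫⁻ v : Fin k → α, F (Fin.snoc v x) := by
  have e := volume_preserving_piFinSuccAbove (fun _ : Fin (k + 1) => α) (Fin.last k)
  rw [← e.symm.lintegral_comp hF, Measure.volume_eq_prod,
    lintegral_prod (fun p => F ((MeasurableEquiv.piFinSuccAbove (fun _ => α) (Fin.last k)).symm p))
      (hF.comp (MeasurableEquiv.measurable _)).aemeasurable]
  simp [Fin.snocEquiv]

def laplace (z : ℝ) (f : ℝ → ℝ≥0∞) : ℝ≥0∞ :=
  ∫⁻ t in Ioi 0, ENNReal.ofReal (exp (-t * z)) * f t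

lemma laplace_lintegral_Ioo_mul_sub {f g : ℝ → ℝ≥0∞} (hf : Measurable f)
    (hg : Measurable g) (z : ℝ) :
    laplace z (fun t => ∫⁻ x in Ioo 0 t, f x * g (t - x)) = laplace z f * laplace z g := by
  have hexp : ∀ x t : ℝ, ENNReal.ofReal (exp (-x * z)) * ENNReal.ofReal (exp (-(t - x) * z))
      = ENNReal.ofReal (exp (-t * z)) := fun x t => by
    rw [← ENNReal.ofReal_mul (exp_nonneg _), ← exp_add]
    ring_nf
  symm
  calc laplace z f * laplace z g
      = ∫⁻ x in Ioi 0, ENNReal.ofReal (exp (-x * z)) * f x * laplace z g :=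
        (lintegral_mul_const _ (by fun_prop)).symm
    _ = ∫⁻ x in Ioi 0, ∫⁻ t in Ioi x,
          ENNReal.ofReal (exp (-t * z)) * (f x * g (t - x)) := by
        congr with x
        rw [laplace, ← lintegral_Ioi_comp_sub _ x, ← lintegral_const_mul _ (by fun_prop)]
        congr with t
        rw [← hexp x t]
        ring
    _ = ∫⁻ t in Ioi 0, ∫⁻ x in Ioo 0 t, ENNReal.ofReal (exp (-t * z)) * (f x * g (t - x)) :=
        lintegral_Ioi_lintegral_Ioi_swap (by fun_prop)
    _ = laplace z (fun t => ∫⁻ x in Ioo 0 t, f x * g (t - x)) := by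
        simp_rw [laplace, lintegral_const_mul' _ _ ENNReal.ofReal_ne_top]

lemma laplace_ofReal (h : ℝ → ℝ) (z : ℝ) :
    laplace z (fun t => ENNReal.ofReal (h t))
      = ∫⁻ w in Ioi 0, ENNReal.ofReal (h w * exp (-w * z)) := by
  simp_rw [laplace, ENNReal.ofReal_mul' (exp_nonneg _), mul_comm]

def timeSimplex (k : ℕ) (t : ℝ) : Set (Fin k → ℝ) :=
  {u | Monotone u ∧ ∀ i, u i ∈ Icc 0 t}

lemma measurableSet_timeSimplex_prod (k : ℕ) :
    MeasurableSet {p : ℝ × (Fin k → ℝ) | p.2 ∈ timeSimplex k p.1} := by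
  refine measurableSet_setOfPred.2 ?_
  simp only [timeSimplex, Monotone, mem_Icc, mem_ofPred_eq]
  fun_prop

lemma measurableSet_timeSimplex (k : ℕ) (t : ℝ) : MeasurableSet (timeSimplex k t) :=
  measurableSet_timeSimplex_prod k |>.preimage (measurable_const.prodMk measurable_id)

lemma timeSimplex_mono (k : ℕ) {s t : ℝ} (hst : s ≤ t) :
    timeSimplex k s ⊆ timeSimplex k t :=
  fun _ hu => ⟨hu.1, fun i => ⟨(hu.2 i).1, (hu.2 i).2.trans hst⟩⟩

lemma timeSimplex_zero (t : ℝ) : timeSimplex 0 t = univ :=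
  eq_univ_of_forall fun _ => ⟨fun i => i.elim0, fun i => i.elim0⟩

lemma mem_timeSimplex_of_snoc {k : ℕ} {t x : ℝ} {v : Fin k → ℝ}
    (hv : (Fin.snoc v x : Fin (k + 1) → ℝ) ∈ timeSimplex (k + 1) t) :
    v ∈ timeSimplex k x ∧ x ∈ Icc 0 t := by
  obtain ⟨hmono, hbound⟩ := hv
  refine ⟨⟨fun i j hij => ?_, fun i => ⟨?_, ?_⟩⟩, by simpa using hbound (Fin.last k)⟩
  · simpa using hmono (Fin.castSucc_le_castSucc_iff.2 hij)
  · simpa using (hbound i.castSucc).1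
  · simpa using hmono (Fin.castSucc_lt_last i).le

lemma setLIntegral_timeSimplex_succ_le {k : ℕ} {t : ℝ}
    {F : (Fin (k + 1) → ℝ) → ℝ≥0∞} (hF : Measurable F) :
    ∫⁻ u in timeSimplex (k + 1) t, F u
      ≤ ∫⁻ x in Icc 0 t, ∫⁻ v in timeSimplex k x, F (Fin.snoc v x) := by
  rw [← lintegral_indicator (measurableSet_timeSimplex _ _),
    lintegral_fin_snoc (hF.indicator (measurableSet_timeSimplex _ _)),
    ← lintegral_indicator measurableSet_Icc]
  refine lintegral_mono fun x => ?_
  by_cases hx : x ∈ Icc 0 t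
  · rw [indicator_of_mem hx, ← lintegral_indicator (measurableSet_timeSimplex _ _)]
    refine lintegral_mono fun v => ?_
    by_cases hv : (Fin.snoc v x : Fin (k + 1) → ℝ) ∈ timeSimplex (k + 1) t
    · rw [indicator_of_mem hv, indicator_of_mem (mem_timeSimplex_of_snoc hv).1]
    · rw [indicator_of_notMem hv]
      exact zero_le
  · have hzero : ∀ v : Fin k → ℝ,
        (timeSimplex (k + 1) t).indicator F (Fin.snoc v x) = 0 := fun v =>
      indicator_of_notMem (fun hv => hx (mem_timeSimplex_of_snoc hv).2) _
    simp [hzero]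

def coord {k : ℕ} (u : Fin k → ℝ) (j : ℕ) : ℝ := if hj : j < k then u ⟨j, hj⟩ else 0

@[fun_prop]
lemma measurable_coord {k : ℕ} (j : ℕ) : Measurable fun u : Fin k → ℝ => coord u j := by
  unfold coord
  split_ifs <;> fun_prop

lemma coord_snoc_of_lt {k : ℕ} (u : Fin k → ℝ) (x : ℝ) {j : ℕ} (hj : j < k) :
    coord (Fin.snoc u x : Fin (k + 1) → ℝ) j = coord u j := by
  simp only [coord, dif_pos hj, dif_pos (hj.trans k.lt_succ_self)]
  exact Fin.snoc_castSucc (α := fun _ => ℝ) (i := ⟨j, hj⟩) ..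

lemma coord_snoc_self {k : ℕ} (u : Fin k → ℝ) (x : ℝ) :
    coord (Fin.snoc u x : Fin (k + 1) → ℝ) k = x := by
  simp only [coord, dif_pos k.lt_succ_self]
  exact Fin.snoc_last (α := fun _ => ℝ) ..

/-- The integrand of `χ_t(π)` for `n = m + 1`; coordinate `j` of `u` is the time `t_{j+2}`. -/
def minIrrWeight (h : ℝ → ℝ) : (m : ℕ) → ℝ → (Fin (2 * m) → ℝ) → ℝ≥0∞
  | 0, t, _ => ENNReal.ofReal (h t)
  | m + 1, t, u =>
      ENNReal.ofReal (h (coord u 1)) *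
      (∏ i ∈ Finset.range m, ENNReal.ofReal (h (coord u (2 * i + 3) - coord u (2 * i)))) *
      ENNReal.ofReal (h (t - coord u (2 * m)))

lemma measurable_minIrrWeight {h : ℝ → ℝ} (hmeas : Measurable h) (m : ℕ) :
    Measurable fun p : ℝ × (Fin (2 * m) → ℝ) => minIrrWeight h m p.1 p.2 := by
  cases m <;> simp only [minIrrWeight] <;> fun_prop

lemma minIrrWeight_snoc_snoc (h : ℝ → ℝ) (m : ℕ) (t x a : ℝ) (v : Fin (2 * m) → ℝ) :
    minIrrWeight h (m + 1) t (Fin.snoc (Fin.snoc v a) x : Fin (2 * m + 2) → ℝ)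
      = minIrrWeight h m x v * ENNReal.ofReal (h (t - a)) := by
  have hv : ∀ j < 2 * m, coord (Fin.snoc (Fin.snoc v a) x : Fin (2 * m + 2) → ℝ) j
      = coord v j := fun j hj => by
    rw [coord_snoc_of_lt _ _ (by omega), coord_snoc_of_lt _ _ hj]
  have ha : coord (Fin.snoc (Fin.snoc v a) x : Fin (2 * m + 2) → ℝ) (2 * m) = a := by
    rw [coord_snoc_of_lt _ _ (by omega), coord_snoc_self]
  have hx : coord (Fin.snoc (Fin.snoc v a) x : Fin (2 * m + 2) → ℝ) (2 * m + 1) = x :=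
    coord_snoc_self _ _
  cases m with
  | zero =>
    simp only [mul_zero, zero_add] at ha hx
    simp [minIrrWeight, ha, hx, mul_comm]
  | succ k =>
    simp only [minIrrWeight, Finset.prod_range_succ, hv 1 (by omega), ha,
      show 2 * k + 3 = 2 * (k + 1) + 1 by ring, hx, hv (2 * k) (by omega)]
    rw [Finset.prod_congr rfl fun i hi => by
      rw [hv (2 * i + 3) (by simp at hi; omega), hv (2 * i) (by simp at hi; omega)]]
    ring

section TimeLabels

variable {n : ℕ} (t : ℝ) (u : Fin (2 * n - 2) → ℝ) {j : ℕ}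

lemma tmv_of_le_one (hj : j ≤ 1) : tmv n t u j = 0 := by
  rw [tmv, if_pos hj]

lemma tmv_of_two_mul_le (hj : 2 * n ≤ j) (h1 : 1 < j) : tmv n t u j = t := by
  rw [tmv, if_neg (by omega), if_pos hj]

lemma tmv_eq_coord (h2 : 2 ≤ j) (hj : j < 2 * n) : tmv n t u j = coord u (j - 2) := by
  rw [tmv, if_neg (by omega), if_neg (by omega)]
  rfl

end TimeLabels

lemma ofReal_prod_minIrr {h : ℝ → ℝ} (hnn : ∀ s, 0 ≤ h s) (m : ℕ) (t : ℝ)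
    (u : Fin (2 * (m + 1) - 2) → ℝ) :
    ENNReal.ofReal (∏ p ∈ minIrr (m + 1), h (tmv (m + 1) t u p.2 - tmv (m + 1) t u p.1))
      = minIrrWeight h m t u := by
  rw [ENNReal.ofReal_prod_of_nonneg fun p _ => hnn _]
  cases m with
  | zero =>
    rw [minIrr, if_pos rfl, Finset.prod_singleton, tmv_of_two_mul_le t u le_rfl (by norm_num),
      tmv_of_le_one t u le_rfl, sub_zero]
    rfl
  | succ k =>
    have h13 : ((1 : ℕ), (3 : ℕ)) ∉ insert (2 * (k + 2) - 2, 2 * (k + 2))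
        ((Finset.range (k + 2 - 2)).image fun i => (2 * i + 2, 2 * i + 5)) := by
      simp only [Finset.mem_insert, Finset.mem_image, Prod.mk.injEq]
      omega
    have hlast : (2 * (k + 2) - 2, 2 * (k + 2)) ∉
        ((Finset.range (k + 2 - 2)).image fun i => (2 * i + 2, 2 * i + 5)) := by
      simp only [Finset.mem_image, Prod.mk.injEq]
      omega
    rw [minIrr, if_neg (by omega), Finset.prod_insert h13, Finset.prod_insert hlast,
      Finset.prod_image fun a _ b _ hab => by simp only [Prod.mk.injEq] at hab; omega,
      show k + 2 - 2 = k by omega]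
    rw [tmv_eq_coord t u (j := 3) (by omega) (by omega), tmv_of_le_one t u le_rfl,
      tmv_of_two_mul_le t u le_rfl (by omega), tmv_eq_coord t u (by omega) (by omega),
      Finset.prod_congr rfl fun i hi => by
        rw [tmv_eq_coord t u (by omega) (by simp at hi; omega),
          tmv_eq_coord t u (j := 2 * i + 2) (by omega) (by simp at hi; omega)]]
    simp only [minIrrWeight, sub_zero, show 2 * (k + 2) - 2 - 2 = 2 * k by omega,
      show ∀ i, 2 * i + 5 - 2 = 2 * i + 3 by omega, show ∀ i, 2 * i + 2 - 2 = 2 * i by omega]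
    ring

/-- `χ_t(π)` for `n = m + 1`, as a lower integral. -/
def minIrrChi (h : ℝ → ℝ) (m : ℕ) (t : ℝ) : ℝ≥0∞ :=
  ∫⁻ u in timeSimplex (2 * m) t, minIrrWeight h m t u

def tailIntegral (h : ℝ → ℝ) (w : ℝ) : ℝ≥0∞ :=
  ∫⁻ y in Ioi 0, ENNReal.ofReal (h (w + y))

lemma measurable_minIrrChi {h : ℝ → ℝ} (hmeas : Measurable h) (m : ℕ) :
    Measurable (minIrrChi h m) := by
  convert ((measurable_minIrrWeight hmeas m).indicator
    (measurableSet_timeSimplex_prod (2 * m))).lintegral_prod_right' (ν := volume) with t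
  rw [minIrrChi, ← lintegral_indicator (measurableSet_timeSimplex _ _)]
  rfl

lemma measurable_tailIntegral {h : ℝ → ℝ} (hmeas : Measurable h) :
    Measurable (tailIntegral h) :=
  Measurable.lintegral_prod_right' (f := fun p : ℝ × ℝ => ENNReal.ofReal (h (p.1 + p.2)))
    (by fun_prop)

lemma minIrrChi_zero (h : ℝ → ℝ) (t : ℝ) : minIrrChi h 0 t = ENNReal.ofReal (h t) := by
  simp [minIrrChi, timeSimplex_zero, minIrrWeight, volume_pi]

lemma ofReal_chi_minIrr_le {h : ℝ → ℝ} (hnn : ∀ s, 0 ≤ h s) (m : ℕ) (t : ℝ) :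
    ENNReal.ofReal (chi h (m + 1) t (minIrr (m + 1))) ≤ minIrrChi h m t :=
  (ofReal_integral_le_lintegral_ofReal
    (ae_of_all _ fun _ => Finset.prod_nonneg fun _ _ => hnn _)).trans_eq
    (lintegral_congr fun u => ofReal_prod_minIrr hnn m t u)

lemma minIrrChi_succ_le {h : ℝ → ℝ} (hmeas : Measurable h) (m : ℕ) (t : ℝ) :
    minIrrChi h (m + 1) t ≤ ∫⁻ x in Ioo 0 t, minIrrChi h m x * tailIntegral h (t - x) := by
  have hW : Measurable (minIrrWeight h (m + 1) t) :=
    (measurable_minIrrWeight hmeas (m + 1)).comp (measurable_const.prodMk measurable_id)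
  calc minIrrChi h (m + 1) t
      ≤ ∫⁻ x in Icc 0 t, ∫⁻ w in timeSimplex (2 * m + 1) x,
          minIrrWeight h (m + 1) t (Fin.snoc w x) :=
        setLIntegral_timeSimplex_succ_le hW
    _ ≤ ∫⁻ x in Icc 0 t, ∫⁻ a in Icc 0 x, ∫⁻ v in timeSimplex (2 * m) a,
          minIrrWeight h (m + 1) t (Fin.snoc (Fin.snoc v a) x) :=
        lintegral_mono fun x => setLIntegral_timeSimplex_succ_le (hW.comp (by fun_prop))
    _ = ∫⁻ x in Icc 0 t, ∫⁻ a in Icc 0 x, ∫⁻ v in timeSimplex (2 * m) a,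
          minIrrWeight h m x v * ENNReal.ofReal (h (t - a)) := by
        simp_rw [minIrrWeight_snoc_snoc]
    -- the only loss: `v ∈ timeSimplex (2 * m) a` and `0 ≤ a` are relaxed
    _ ≤ ∫⁻ x in Icc 0 t, ∫⁻ a in Iic x, minIrrChi h m x * ENNReal.ofReal (h (t - a)) := by
        refine lintegral_mono fun x => (setLIntegral_mono' measurableSet_Icc fun a ha => ?_).trans
          (lintegral_mono_set Icc_subset_Iic_self)
        rw [lintegral_mul_const' _ _ ENNReal.ofReal_ne_top]
        gcongr
        exact lintegral_mono_set (timeSimplex_mono _ ha.2)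
    _ = ∫⁻ x in Ioo 0 t, minIrrChi h m x * tailIntegral h (t - x) := by
        rw [setLIntegral_congr Ioo_ae_eq_Icc]
        congr with x
        rw [lintegral_const_mul _ (by fun_prop), tailIntegral,
          lintegral_Iic_comp_sub (fun s => ENNReal.ofReal (h s))]

lemma laplace_tailIntegral {h : ℝ → ℝ} (hmeas : Measurable h) (z : ℝ) :
    laplace z (tailIntegral h)
      = ∫⁻ p in Ioi 0 ×ˢ Ioi 0, ENNReal.ofReal (h (p.1 + p.2) * exp (-p.2 * z)) := by
  rw [Measure.volume_eq_prod, ← Measure.prod_restrict,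
    lintegral_prod_symm _ (by fun_prop : Measurable fun p : ℝ × ℝ =>
      ENNReal.ofReal (h (p.1 + p.2) * exp (-p.2 * z))).aemeasurable]
  refine lintegral_congr fun w => ?_
  rw [tailIntegral, ← lintegral_const_mul' _ _ ENNReal.ofReal_ne_top]
  congr with y
  rw [ENNReal.ofReal_mul' (exp_nonneg _), add_comm, mul_comm]

lemma laplace_minIrrChi_le {h : ℝ → ℝ} (hmeas : Measurable h) (z : ℝ) (m : ℕ) :
    laplace z (minIrrChi h m)
      ≤ laplace z (fun t => ENNReal.ofReal (h t)) * laplace z (tailIntegral h) ^ m := by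
  induction m with
  | zero => simp [funext (minIrrChi_zero h)]
  | succ m ih =>
    calc laplace z (minIrrChi h (m + 1))
        ≤ laplace z fun t => ∫⁻ x in Ioo 0 t, minIrrChi h m x * tailIntegral h (t - x) :=
          lintegral_mono fun t => by gcongr; exact minIrrChi_succ_le hmeas m t
      _ = laplace z (minIrrChi h m) * laplace z (tailIntegral h) :=
          laplace_lintegral_Ioo_mul_sub (measurable_minIrrChi hmeas m)
            (measurable_tailIntegral hmeas) z
      _ ≤ laplace z (fun t => ENNReal.ofReal (h t)) * laplace z (tailIntegral h) ^ (m + 1) := by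
          grw [ih, pow_succ, mul_assoc]

end MinIrr

open MinIrr in
/-- Laplace-transform bound for the minimally irreducible pairing:
`∫_{ℝ₊} e^{-tz} χ_t(π) dt ≤ (∫ h(w)e^{-wz} dw) (∫∫ h(y+w)e^{-wz} dy dw)^{n-1}`. -/
theorem laplace_transform_minimally_irreducible_bound
    (h : ℝ → ℝ) (hmeas : Measurable h) (hnn : ∀ s, 0 ≤ h s)
    (z : ℝ) (n : ℕ) (hn : 1 ≤ n)
    (h1 : IntegrableOn (fun w => h w * Real.exp (-w * z)) (Set.Ioi 0))
    (h2 : IntegrableOn (fun p : ℝ × ℝ => h (p.1 + p.2) * Real.exp (-p.2 * z))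
      ((Set.Ioi (0 : ℝ)) ×ˢ (Set.Ioi (0 : ℝ)))) :
    (∫ t in Set.Ioi (0 : ℝ), Real.exp (-t * z) * chi h n t (minIrr n))
      ≤ (∫ w in Set.Ioi (0 : ℝ), h w * Real.exp (-w * z)) *
        (∫ p in (Set.Ioi (0 : ℝ)) ×ˢ (Set.Ioi (0 : ℝ)),
            h (p.1 + p.2) * Real.exp (-p.2 * z)) ^ (n - 1) := by
  obtain ⟨m, rfl⟩ : ∃ m, n = m + 1 := ⟨n - 1, by omega⟩
  have hA0 : 0 ≤ ∫ w in Set.Ioi 0, h w * exp (-w * z) :=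
    integral_nonneg fun w => mul_nonneg (hnn w) (exp_nonneg _)
  have hB0 : 0 ≤ ∫ p in Set.Ioi 0 ×ˢ Set.Ioi 0, h (p.1 + p.2) * exp (-p.2 * z) :=
    integral_nonneg fun p => mul_nonneg (hnn _) (exp_nonneg _)
  rw [Nat.add_sub_cancel, ← ENNReal.ofReal_le_ofReal_iff (by positivity), ENNReal.ofReal_mul hA0,
    ENNReal.ofReal_pow hB0, ofReal_integral_eq_lintegral_ofReal h1
      (ae_of_all _ fun w => mul_nonneg (hnn w) (exp_nonneg _)),
    ofReal_integral_eq_lintegral_ofReal h2 (ae_of_all _ fun p => mul_nonneg (hnn _) (exp_nonneg _)),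
    ← laplace_ofReal, ← laplace_tailIntegral hmeas]
  calc ENNReal.ofReal (∫ t in Set.Ioi 0, exp (-t * z) * chi h (m + 1) t (minIrr (m + 1)))
      ≤ ∫⁻ t in Set.Ioi 0, ENNReal.ofReal (exp (-t * z) * chi h (m + 1) t (minIrr (m + 1))) :=
        ofReal_integral_le_lintegral_ofReal (ae_of_all _ fun t => mul_nonneg (exp_nonneg _)
          (integral_nonneg fun _ => Finset.prod_nonneg fun _ _ => hnn _))
    _ ≤ laplace z (minIrrChi h m) := lintegral_mono fun t => by
        rw [ENNReal.ofReal_mul (exp_nonneg _)]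
        gcongr
        exact ofReal_chi_minIrr_le hnn m t
    _ ≤ _ := laplace_minIrrChi_le hmeas z m
end
end
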